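/- arXiv:2201.12677 — 4 statements merged into one kernel-verified Lean document; each statement's English description precedes it below -/
import Mathlib

section
/- Let X be a folded normal random variable, X = |μ + σZ| with Z standard normal and μ ≥ 0. Then for all t ≥ 0, E[exp(−tX)] ≤ exp(σ²t²/2 − μt). -/
open MeasureTheory ProbabilityTheory Real Complex
open scoped NNReal ENNReal

lemma aux_integral_exp (c : ℝ) :
    ∫ x : ℝ, Real.exp (-(1/2) * x ^ 2 + c * x) = Real.sqrt (2*π) * Real.exp (c^2/2) := by
  have hb : (-(1/2) : ℂ).re < 0 := by norm_num
  have h := integral_cexp_quadratic hb (c : ℂ) 0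
  have hfun : ∀ x : ℝ, Complex.exp ((-(1/2) : ℂ) * (x:ℂ) ^ 2 + (c:ℂ) * x + 0) =
      ((Real.exp (-(1/2) * x ^ 2 + c * x) : ℝ) : ℂ) := by
    intro x
    rw [Complex.ofReal_exp]
    push_cast
    ring_nf
  have h3 : ((∫ x : ℝ, Real.exp (-(1/2) * x ^ 2 + c * x) : ℝ) : ℂ)
      = ∫ x : ℝ, ((Real.exp (-(1/2) * x ^ 2 + c * x) : ℝ) : ℂ) := integral_ofReal.symm
  rw [← Complex.ofReal_inj, h3]
  simp_rw [← hfun]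
  rw [h]
  have h1 : ((↑π / - -(1/2) : ℂ)) = ((2*π : ℝ) : ℂ) := by push_cast; ring
  rw [h1, show ((0:ℂ) - (c:ℂ)^2/(4 * -(1/2))) = (((c^2/2 : ℝ)):ℂ) by push_cast; ring,
    show ((1:ℂ)/2) = (((1/2 : ℝ)):ℂ) by norm_num,
    ← Complex.ofReal_cpow (by positivity)]
  rw [← Complex.ofReal_exp, ← Complex.ofReal_mul, Complex.ofReal_inj]
  congr 1
  rw [← Real.sqrt_eq_rpow]

lemma aux_integrable_exp (c : ℝ) :
    Integrable (fun x : ℝ => Real.exp (-(1/2) * x ^ 2 + c * x)) := by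
  have hb : (-(1/2) : ℂ).re < 0 := by norm_num
  have h := (integrable_cexp_quadratic' hb (c : ℂ) 0).re
  refine h.congr (Filter.Eventually.of_forall fun x => ?_)
  show (Complex.exp ((-(1/2) : ℂ) * (x:ℂ) ^ 2 + (c:ℂ) * x + 0)).re
      = Real.exp (-(1/2) * x ^ 2 + c * x)
  rw [show ((-(1/2) : ℂ) * (x:ℂ) ^ 2 + (c:ℂ) * x + 0) = (((-(1/2) * x ^ 2 + c * x : ℝ)):ℂ) by
    push_cast; ring]
  exact Complex.exp_ofReal_re _

lemma aux_pdf_mul (c : ℝ) (x : ℝ) :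
    gaussianPDFReal 0 1 x * Real.exp (c * x)
      = (Real.sqrt (2*π))⁻¹ * Real.exp (-(1/2) * x ^ 2 + c * x) := by
  simp only [gaussianPDFReal]
  rw [Real.exp_add]
  push_cast
  ring_nf

lemma aux_density : gaussianReal 0 1
    = MeasureTheory.volume.withDensity (fun x => ((gaussianPDFReal 0 1 x).toNNReal : ℝ≥0∞)) := by
  rw [gaussianReal_of_var_ne_zero 0 one_ne_zero]
  rfl

lemma aux_gauss_integrable (c : ℝ) :
    Integrable (fun z => Real.exp (c * z)) (gaussianReal 0 1) := by
  rw [aux_density]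
  refine (integrable_withDensity_iff_integrable_smul
    ((measurable_gaussianPDFReal 0 1).real_toNNReal)).mpr ?_
  have : (fun x : ℝ => (gaussianPDFReal 0 1 x).toNNReal • Real.exp (c * x))
      = fun x : ℝ => (Real.sqrt (2*π))⁻¹ * Real.exp (-(1/2) * x ^ 2 + c * x) := by
    funext x
    rw [NNReal.smul_def, smul_eq_mul, Real.coe_toNNReal _ (gaussianPDFReal_nonneg 0 1 x)]
    exact aux_pdf_mul c x
  rw [this]
  exact (aux_integrable_exp c).const_mul _

lemma aux_gauss_integral (c : ℝ) :
    ∫ z, Real.exp (c * z) ∂(gaussianReal 0 1) = Real.exp (c ^ 2 / 2) := by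
  rw [aux_density, integral_withDensity_eq_integral_smul
    ((measurable_gaussianPDFReal 0 1).real_toNNReal)]
  have : (fun x : ℝ => (gaussianPDFReal 0 1 x).toNNReal • Real.exp (c * x))
      = fun x : ℝ => (Real.sqrt (2*π))⁻¹ * Real.exp (-(1/2) * x ^ 2 + c * x) := by
    funext x
    rw [NNReal.smul_def, smul_eq_mul, Real.coe_toNNReal _ (gaussianPDFReal_nonneg 0 1 x)]
    exact aux_pdf_mul c x
  rw [show ∫ x : ℝ, (gaussianPDFReal 0 1 x).toNNReal • Real.exp (c * x)
      = ∫ x : ℝ, (Real.sqrt (2*π))⁻¹ * Real.exp (-(1/2) * x ^ 2 + c * x) by rw [this],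
    integral_const_mul, aux_integral_exp c, ← mul_assoc,
    inv_mul_cancel₀ (by positivity : Real.sqrt (2*π) ≠ 0), one_mul]

theorem foldedNormal_mgf_bound (μ σ t : ℝ) (hμ : 0 ≤ μ) (hσ : 0 ≤ σ) (ht : 0 ≤ t) :
    ∫ z, Real.exp (-t * |μ + σ * z|) ∂(gaussianReal 0 1)
      ≤ Real.exp (σ ^ 2 * t ^ 2 / 2 - μ * t) := by
  have hle : ∀ z : ℝ, Real.exp (-t * |μ + σ * z|)
      ≤ Real.exp (-(μ*t)) * Real.exp (-(σ * t) * z) := by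
    intro z
    rw [← Real.exp_add]
    apply Real.exp_le_exp.mpr
    nlinarith [mul_le_mul_of_nonneg_left (le_abs_self (μ + σ * z)) ht]
  have hint : Integrable (fun z => Real.exp (-(μ*t)) * Real.exp (-(σ * t) * z))
      (gaussianReal 0 1) := (aux_gauss_integrable _).const_mul _
  refine (integral_mono_of_nonneg (Filter.Eventually.of_forall fun z => (Real.exp_pos _).le)
    hint (Filter.Eventually.of_forall hle)).trans ?_
  rw [integral_const_mul, aux_gauss_integral, ← Real.exp_add]
  exact le_of_eq (by congr 1; ring)
end

section
/- Let k ~ Binomial(n, p) and s = ⌈n·p⌉. Then the mean absolute deviation satisfies E[|p − k/n|] = (2/n)·s·C(n,s)·p^s·(1−p)^{n−s+1}, where C(n,s) is the binomial coefficient. -/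
/-!
Put `w k = C(n,k) p^k (1-p)^(n-k)` and `g m = m C(n,m) p^m (1-p)^(n+1-m)`. The identity
`(k+1) C(n,k+1) = (n-k) C(n,k)` makes `w k (np - k) = g (k+1) - g k`, so the partial sums of
`w k (np - k)` telescope to `g m`; the full sum vanishes since `g (n+1) = 0`. The summand is
nonnegative exactly for `k < s = ⌈np⌉`, hence the sum of its absolute values is `2 g s`.
-/

open Finset

def deMoivreTerm {R : Type*} [CommRing R] (n m : ℕ) (p : R) : R :=
  m * n.choose m * p ^ m * (1 - p) ^ (n + 1 - m)

section Telescope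

variable {R : Type*} [CommRing R] (n : ℕ) (p : R)

theorem choose_mul_pow_mul_sub_eq_deMoivreTerm_sub (k : ℕ) :
    n.choose k * p ^ k * (1 - p) ^ (n - k) * (n * p - k) =
      deMoivreTerm n (k + 1) p - deMoivreTerm n k p := by
  rcases le_or_gt k n with hk | hk
  · have hchoose : (n.choose (k + 1) : R) * (k + 1) = n.choose k * (n - k) := by
      have h := congrArg (Nat.cast : ℕ → R) (Nat.choose_succ_right_eq n k)
      push_cast [Nat.cast_sub hk] at h
      exact h
    rw [deMoivreTerm, deMoivreTerm, show n + 1 - (k + 1) = n - k by omega,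
      show n + 1 - k = n - k + 1 by omega]
    push_cast
    linear_combination (-(p ^ (k + 1) * (1 - p) ^ (n - k))) * hchoose
  · simp [deMoivreTerm, Nat.choose_eq_zero_of_lt hk,
      Nat.choose_eq_zero_of_lt (hk.trans k.lt_succ_self)]

theorem sum_range_choose_mul_pow_mul_sub (m : ℕ) :
    ∑ k ∈ range m, n.choose k * p ^ k * (1 - p) ^ (n - k) * (n * p - k) = deMoivreTerm n m p := by
  rw [sum_congr rfl fun k _ => choose_mul_pow_mul_sub_eq_deMoivreTerm_sub n p k,
    sum_range_sub (deMoivreTerm n · p)]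
  simp [deMoivreTerm]

theorem sum_range_succ_choose_mul_pow_mul_sub :
    ∑ k ∈ range (n + 1), n.choose k * p ^ k * (1 - p) ^ (n - k) * (n * p - k) = 0 := by
  simp [sum_range_choose_mul_pow_mul_sub, deMoivreTerm]

end Telescope

theorem sum_range_abs_eq_two_mul_sum_of_sign_change {R : Type*} [CommRing R] [LinearOrder R]
    [IsOrderedRing R] {f : ℕ → R} {N s : ℕ} (hsN : s ≤ N)
    (hsum : ∑ k ∈ range N, f k = 0) (hpos : ∀ k < s, 0 ≤ f k) (hneg : ∀ k, s ≤ k → f k ≤ 0) :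
    ∑ k ∈ range N, |f k| = 2 * ∑ k ∈ range s, f k := by
  rw [← sum_range_add_sum_Ico _ hsN] at hsum ⊢
  have hlow : ∑ k ∈ range s, |f k| = ∑ k ∈ range s, f k :=
    sum_congr rfl fun k hk => abs_of_nonneg (hpos k (mem_range.mp hk))
  have hhigh : ∑ k ∈ Ico s N, |f k| = -∑ k ∈ Ico s N, f k := by
    rw [← sum_neg_distrib]
    exact sum_congr rfl fun k hk => abs_of_nonpos (hneg k (mem_Ico.mp hk).1)
  rw [hlow, hhigh]
  linear_combination -hsum

theorem binomial_mean_deviation (n : ℕ) (hn : 0 < n) (p : ℝ) (hp0 : 0 ≤ p) (hp1 : p ≤ 1) :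
    ∑ k ∈ Finset.range (n + 1),
        (n.choose k : ℝ) * p ^ k * (1 - p) ^ (n - k) * |p - (k : ℝ) / n|
      = (2 / n) * (⌈(n : ℝ) * p⌉₊ : ℝ) * (n.choose ⌈(n : ℝ) * p⌉₊ : ℝ)
        * p ^ (⌈(n : ℝ) * p⌉₊) * (1 - p) ^ (n - ⌈(n : ℝ) * p⌉₊ + 1) := by
  have hnR : (0 : ℝ) < n := Nat.cast_pos.mpr hn
  set s := ⌈(n : ℝ) * p⌉₊
  have hsn : s ≤ n := Nat.ceil_le.mpr (by nlinarith)
  have hweight (k : ℕ) : (0 : ℝ) ≤ n.choose k * p ^ k * (1 - p) ^ (n - k) := by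
    have : 0 ≤ 1 - p := by linarith
    positivity
  have hterm (k : ℕ) : (n.choose k : ℝ) * p ^ k * (1 - p) ^ (n - k) * |p - (k : ℝ) / n| =
      |n.choose k * p ^ k * (1 - p) ^ (n - k) * (n * p - k)| / n := by
    rw [abs_mul, abs_of_nonneg (hweight k), show p - (k : ℝ) / n = (n * p - k) / n by field_simp,
      abs_div, abs_of_pos hnR, mul_div_assoc]
  have habs := sum_range_abs_eq_two_mul_sum_of_sign_change (by omega : s ≤ n + 1)
    (sum_range_succ_choose_mul_pow_mul_sub n p)
    (fun k hk => mul_nonneg (hweight k) (by linarith [Nat.lt_ceil.mp hk]))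
    (fun k hk => mul_nonpos_of_nonneg_of_nonpos (hweight k) (by linarith [Nat.ceil_le.mp hk]))
  rw [sum_congr rfl fun k _ => hterm k, ← sum_div, habs, sum_range_choose_mul_pow_mul_sub,
    deMoivreTerm, show n + 1 - s = n - s + 1 by omega]
  ring
end

section
/- Let k⃗ ~ Multinomial(n, p⃗) over a finite set of outcomes. Then E[‖p⃗ − k⃗/n‖₁] = (2/n)·Σₓ s(x)·C(n, s(x))·p(x)^{s(x)}·(1 − p(x))^{n − s(x) + 1}, where s(x) = ⌈n·p(x)⌉. -/
/-!
The expectation is a finite sum against the multinomial distribution; exchanging the sum over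
outcomes `x` with it and summing out every coordinate but `x` leaves the binomial distribution of
`k x`. For binomial weights `b j = C(n,j) p^j (1-p)^(n-j)` the centred terms telescope,
`(j - n p) b j = g j - g (j+1)` with `g j = j C(n,j) p^j (1-p)^(n+1-j)`, so the mean is
`n p` and the mean absolute deviation, `2 ∑_{j < ⌈n p⌉} (n p - j) b j`, equals `2 g ⌈n p⌉`.
-/

open MeasureTheory Finset

theorem sub_mul_choose_mul_pow_eq_sub (p : ℝ) {n j : ℕ} (hj : j ≤ n) :
    ((j : ℝ) - n * p) * (n.choose j * p ^ j * (1 - p) ^ (n - j))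
      = j * n.choose j * p ^ j * (1 - p) ^ (n + 1 - j)
        - (j + 1 : ℕ) * n.choose (j + 1) * p ^ (j + 1) * (1 - p) ^ (n + 1 - (j + 1)) := by
  have hchoose : (n.choose (j + 1) : ℝ) * (j + 1) = n.choose j * (n - j) := by
    exact_mod_cast Nat.choose_succ_right_eq n j
  rw [show n + 1 - j = n - j + 1 by omega, show n + 1 - (j + 1) = n - j by omega]
  push_cast
  linear_combination (p ^ j * p * (1 - p) ^ (n - j)) * hchoose

theorem sum_range_sub_mul_choose_mul_pow (p : ℝ) {n s : ℕ} (hs : s ≤ n + 1) :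
    ∑ j ∈ range s, ((j : ℝ) - n * p) * (n.choose j * p ^ j * (1 - p) ^ (n - j))
      = -(s * n.choose s * p ^ s * (1 - p) ^ (n + 1 - s)) := by
  rw [sum_congr rfl fun j hj ↦ sub_mul_choose_mul_pow_eq_sub p (by grind), sum_range_sub']
  simp

theorem sum_range_abs_sub_mul_choose_mul_pow {p : ℝ} (hp : p ≤ 1) (n : ℕ) :
    ∑ j ∈ range (n + 1), |n * p - j| * (n.choose j * p ^ j * (1 - p) ^ (n - j))
      = 2 * ⌈n * p⌉₊ * n.choose ⌈n * p⌉₊ * p ^ ⌈n * p⌉₊ * (1 - p) ^ (n - ⌈n * p⌉₊ + 1) := by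
  set s := ⌈n * p⌉₊
  set b : ℕ → ℝ := fun j ↦ n.choose j * p ^ j * (1 - p) ^ (n - j)
  have hsn : s ≤ n := Nat.ceil_le.2 (by nlinarith)
  -- `n p - j > 0` exactly when `j < s`
  have habs : ∀ j : ℕ, |n * p - j| * b j
      = (j - n * p) * b j + if j < s then -2 * ((j - n * p) * b j) else 0 := by
    intro j
    split_ifs with hjs
    · rw [abs_of_pos (sub_pos.2 (Nat.lt_ceil.1 hjs))]; ring
    · rw [abs_of_nonpos (sub_nonpos.2 (Nat.ceil_le.1 (not_lt.1 hjs)))]; ring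
  have hmean := sum_range_sub_mul_choose_mul_pow p (le_refl (n + 1))
  simp only [Nat.choose_succ_self, Nat.cast_zero, mul_zero, zero_mul, neg_zero] at hmean
  rw [sum_congr rfl fun j _ ↦ habs j, sum_add_distrib, hmean, zero_add, ← sum_filter,
    show (range (n + 1)).filter (· < s) = range s by ext; simp; omega, ← mul_sum,
    sum_range_sub_mul_choose_mul_pow p (by omega), show n - s + 1 = n + 1 - s by omega]
  ring

theorem sum_piAntidiag_cons_mul_multinomial {ι R : Type*} [DecidableEq ι] [CommSemiring R]
    {s : Finset ι} {x : ι} (hx : x ∉ s) (n : ℕ) (u : ℕ → R) (p : ι → R) :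
    ∑ f ∈ piAntidiag (cons x s hx) n,
        u (f x) * (Nat.multinomial (cons x s hx) f * ∏ y ∈ cons x s hx, p y ^ f y)
      = ∑ j ∈ range (n + 1), u j * (n.choose j * p x ^ j * (∑ y ∈ s, p y) ^ (n - j)) := by
  rw [piAntidiag_cons, sum_disjiUnion, Nat.sum_antidiagonal_eq_sum_range_succ_mk]
  refine sum_congr rfl fun j hj ↦ ?_
  rw [sum_map, sum_pow_eq_sum_piAntidiag, mul_sum, mul_sum]
  refine sum_congr rfl fun g hg ↦ ?_
  obtain ⟨hg_sum, hg_supp⟩ := mem_piAntidiag.1 hg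
  set f := addRightEmbedding (fun t ↦ if t = x then j else 0) g
  have hgx : g x = 0 := by_contra fun h ↦ hx (hg_supp x h)
  have hfx : f x = j := by simp [f, hgx]
  have hfs : ∀ t ∈ s, f t = g t := fun t ht ↦ by
    simp [f, ne_of_mem_of_not_mem ht hx]
  rw [Nat.multinomial_cons, hfx, Nat.multinomial_congr hfs, sum_congr rfl hfs, hg_sum,
    Nat.add_sub_cancel' (Nat.lt_succ_iff.1 (mem_range.1 hj)), prod_cons, hfx,
    prod_congr rfl fun t ht ↦ by rw [hfs t ht]]
  push_cast
  ring

theorem sum_piAntidiag_univ_mul_multinomial {ι R : Type*} [Fintype ι] [DecidableEq ι]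
    [CommSemiring R] (x : ι) (n : ℕ) (u : ℕ → R) (p : ι → R) :
    ∑ f ∈ piAntidiag univ n, u (f x) * (Nat.multinomial univ f * ∏ y, p y ^ f y)
      = ∑ j ∈ range (n + 1),
          u j * (n.choose j * p x ^ j * (∑ y ∈ univ.erase x, p y) ^ (n - j)) := by
  have h := sum_piAntidiag_cons_mul_multinomial (notMem_erase x univ) n u p
  rwa [show cons x (univ.erase x) (notMem_erase x univ) = univ by simp] at h

theorem sum_range_abs_sub_div_mul_choose_mul_pow {p : ℝ} (hp : p ≤ 1) {n : ℕ} (hn : 0 < n) :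
    ∑ j ∈ range (n + 1), |p - j / n| * (n.choose j * p ^ j * (1 - p) ^ (n - j))
      = 2 / n * (⌈n * p⌉₊ * n.choose ⌈n * p⌉₊ * p ^ ⌈n * p⌉₊ * (1 - p) ^ (n - ⌈n * p⌉₊ + 1)) := by
  have hn' : (0 : ℝ) < n := Nat.cast_pos.2 hn
  have habs : ∀ j : ℕ, |p - j / n| * (n.choose j * p ^ j * (1 - p) ^ (n - j))
      = |n * p - j| * (n.choose j * p ^ j * (1 - p) ^ (n - j)) / n := fun j ↦ by
    rw [show p - j / n = (n * p - j) / n by field_simp, abs_div, abs_of_pos hn', div_mul_eq_mul_div]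
  rw [sum_congr rfl fun j _ ↦ habs j, ← sum_div, sum_range_abs_sub_mul_choose_mul_pow hp]
  ring

theorem integral_comp_eq_sum_measureReal_preimage_smul {Ω α E : Type*} [MeasurableSpace Ω]
    [NormedAddCommGroup E] [NormedSpace ℝ E] [CompleteSpace E]
    {P : Measure Ω} [IsProbabilityMeasure P] {K : Ω → α} {F : Finset α}
    (hK : ∀ f ∈ F, MeasurableSet (K ⁻¹' {f})) (hF : ∑ f ∈ F, P.real (K ⁻¹' {f}) = 1)
    (φ : α → E) :
    ∫ ω, φ (K ω) ∂P = ∑ f ∈ F, P.real (K ⁻¹' {f}) • φ f := by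
  classical
  have hK_mem : ∀ᵐ ω ∂P, K ω ∈ F := by
    have hmeas : MeasurableSet (K ⁻¹' F) := by
      rw [← Set.biUnion_preimage_singleton]
      exact F.measurableSet_biUnion hK
    refine (ae_mem_iff_measure_eq hmeas.nullMeasurableSet).2 ?_
    rw [measure_univ, ← ENNReal.toReal_eq_one_iff, ← measureReal_def,
      ← sum_measureReal_preimage_singleton F hK, hF]
  have hφK : (fun ω ↦ φ (K ω)) =ᵐ[P] fun ω ↦ ∑ f ∈ F, (K ⁻¹' {f}).indicator (fun _ ↦ φ f) ω := by
    filter_upwards [hK_mem] with ω hω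
    simp only [Set.indicator_apply, Set.mem_preimage, Set.mem_singleton_iff, sum_ite_eq, hω,
      if_true]
  rw [integral_congr_ae hφK, integral_finsetSum F fun f hf ↦
    (integrable_indicator_iff (hK f hf)).2 (integrableOn_const (measure_ne_top P _))]
  exact sum_congr rfl fun f hf ↦ integral_indicator_const _ (hK f hf)

theorem multinomial_l1_deviation {ι : Type*} [Fintype ι] {Ω : Type*} [MeasurableSpace Ω]
    (P : Measure Ω) [IsProbabilityMeasure P]
    (n : ℕ) (hn : 0 < n) (p : ι → ℝ) (hp0 : ∀ x, 0 ≤ p x) (hp1 : ∑ x, p x = 1)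
    (k : ι → Ω → ℕ) (hmeas : ∀ x, Measurable (k x))
    (hmult : ∀ f : ι → ℕ, ∑ x, f x = n →
      (P {ω | ∀ x, k x ω = f x}).toReal
        = (Nat.multinomial Finset.univ f : ℝ) * ∏ x, p x ^ f x) :
    ∫ ω, ∑ x, |p x - (k x ω : ℝ) / n| ∂P
      = (2 / n) * ∑ x, (⌈(n : ℝ) * p x⌉₊ : ℝ) * (n.choose ⌈(n : ℝ) * p x⌉₊ : ℝ)
          * p x ^ (⌈(n : ℝ) * p x⌉₊) * (1 - p x) ^ (n - ⌈(n : ℝ) * p x⌉₊ + 1) := by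
  classical
  set K : Ω → ι → ℕ := fun ω x ↦ k x ω
  have hPK : ∀ f ∈ piAntidiag univ n,
      P.real (K ⁻¹' {f}) = Nat.multinomial univ f * ∏ x, p x ^ f x := fun f hf ↦ by
    rw [← hmult f (mem_piAntidiag.1 hf).1, measureReal_def]
    congr
    ext ω
    simp [K, funext_iff]
  have hK : ∀ f ∈ piAntidiag univ n, MeasurableSet (K ⁻¹' {f}) := fun f _ ↦
    measurable_pi_lambda K hmeas (measurableSet_singleton f)
  have hK_total : ∑ f ∈ piAntidiag univ n, P.real (K ⁻¹' {f}) = 1 := by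
    rw [sum_congr rfl hPK, ← sum_pow_eq_sum_piAntidiag, hp1, one_pow]
  have hp_le_one : ∀ x, p x ≤ 1 := fun x ↦ hp1 ▸ single_le_sum (fun y _ ↦ hp0 y) (mem_univ x)
  calc ∫ ω, ∑ x, |p x - (k x ω : ℝ) / n| ∂P
      = ∑ f ∈ piAntidiag univ n, P.real (K ⁻¹' {f}) • ∑ x, |p x - (f x : ℝ) / n| :=
        integral_comp_eq_sum_measureReal_preimage_smul hK hK_total
          fun f ↦ ∑ x, |p x - (f x : ℝ) / n|
    _ = ∑ x, ∑ j ∈ range (n + 1), |p x - j / n| * (n.choose j * p x ^ j * (1 - p x) ^ (n - j)) := by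
        simp only [smul_eq_mul, mul_sum, sum_comm (s := piAntidiag univ n)]
        refine sum_congr rfl fun x _ ↦ ?_
        rw [sum_congr rfl fun f hf ↦ by rw [hPK f hf, mul_comm],
          sum_piAntidiag_univ_mul_multinomial x n (fun j : ℕ ↦ |p x - j / n|),
          sum_erase_eq_sub (mem_univ x), hp1]
    _ = _ := by
        rw [mul_sum]
        exact sum_congr rfl fun x _ ↦ sum_range_abs_sub_div_mul_choose_mul_pow (hp_le_one x) hn
end

section
/- The Gaussian mechanism M(D) = f(D) + σΔ(f)·N(0, I), where Δ(f) is the L2 sensitivity of f : D → ℝ^p, satisfies (1/(2σ²))-zCDP. -/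
open MeasureTheory ProbabilityTheory
open scoped NNReal ENNReal

/-- Rényi divergence of order α between two measures. -/
noncomputable def renyiDiv {Ω : Type*} [MeasurableSpace Ω] (α : ℝ) (μ ν : Measure Ω) : ℝ :=
  (α - 1)⁻¹ * Real.log (∫ x, (μ.rnDeriv ν x).toReal ^ α ∂ν)

/-- A mechanism `M` satisfies ρ-zCDP (w.r.t. a neighboring relation) if the Rényi
divergence of order α between outputs on neighboring datasets is at most ρ·α for all α > 1. -/
def zCDP {D Ω : Type*} [MeasurableSpace Ω] (Neighbor : D → D → Prop)
    (M : D → Measure Ω) (ρ : ℝ) : Prop :=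
  ∀ d d' : D, Neighbor d d' → ∀ α : ℝ, 1 < α → renyiDiv α (M d) (M d') ≤ ρ * α

/-! The α-th moment of the density of `N(m, v)` with respect to `N(m', v)` is computed by
completing the square: `φ_{m'} (φ_m / φ_{m'})^α = exp (α (α - 1) (m - m')² / (2 v)) φ_c` with
`c = α m + (1 - α) m'`, so the Rényi divergence of order `α` between the two Gaussians is
`α (m - m')² / (2 v)`. Radon–Nikodym derivatives of product measures are products, so Rényi
divergence adds up over independent coordinates, and the divergence between the outputs of the
mechanism on neighbouring datasets is `α ‖f d - f d'‖² / (2 σ² Δ²) ≤ α / (2 σ²)`. -/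

namespace MeasureTheory

variable {ι : Type*} [Fintype ι] {X : ι → Type*} [∀ i, MeasurableSpace (X i)]

lemma lintegral_fintype_prod_eq_prod (ν : ∀ i, Measure (X i)) [∀ i, IsProbabilityMeasure (ν i)]
    {g : ∀ i, X i → ℝ≥0∞} (hg : ∀ i, Measurable (g i)) :
    ∫⁻ x, ∏ i, g i (x i) ∂Measure.pi ν = ∏ i, ∫⁻ y, g i y ∂ν i := by
  rw [lintegral_prod_eq_prod_lintegral_of_indepFun _ _
    (iIndepFun_pi fun i => (hg i).aemeasurable) fun i => (hg i).comp (measurable_pi_apply i)]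
  refine Finset.prod_congr rfl fun i _ => ?_
  rw [← (measurePreserving_eval ν i).lintegral_comp (hg i)]

lemma Measure.pi_eq_withDensity_prod_rnDeriv (μ ν : ∀ i, Measure (X i))
    [∀ i, SigmaFinite (μ i)] [∀ i, IsProbabilityMeasure (ν i)] (hμν : ∀ i, μ i ≪ ν i) :
    Measure.pi μ = (Measure.pi ν).withDensity fun x => ∏ i, (μ i).rnDeriv (ν i) (x i) := by
  refine Measure.pi_eq fun s hs => ?_
  have hbox : (Set.univ.pi s).indicator (fun x => ∏ i, (μ i).rnDeriv (ν i) (x i))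
      = fun x => ∏ i, (s i).indicator ((μ i).rnDeriv (ν i)) (x i) := by
    funext x
    classical simp [Set.indicator_apply, Finset.prod_ite_zero]
  rw [withDensity_apply _ (MeasurableSet.univ_pi hs),
    ← lintegral_indicator (MeasurableSet.univ_pi hs), hbox,
    lintegral_fintype_prod_eq_prod ν fun i => (Measure.measurable_rnDeriv _ _).indicator (hs i)]
  refine Finset.prod_congr rfl fun i _ => ?_
  rw [lintegral_indicator (hs i), ← withDensity_apply _ (hs i),
    Measure.withDensity_rnDeriv_eq _ _ (hμν i)]

lemma Measure.rnDeriv_pi (μ ν : ∀ i, Measure (X i))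
    [∀ i, SigmaFinite (μ i)] [∀ i, IsProbabilityMeasure (ν i)] (hμν : ∀ i, μ i ≪ ν i) :
    (Measure.pi μ).rnDeriv (Measure.pi ν) =ᵐ[Measure.pi ν]
      fun x => ∏ i, (μ i).rnDeriv (ν i) (x i) := by
  rw [Measure.pi_eq_withDensity_prod_rnDeriv μ ν hμν]
  exact Measure.rnDeriv_withDensity _ (Finset.measurable_prod _ fun i _ =>
    (Measure.measurable_rnDeriv _ _).comp (measurable_pi_apply i))

end MeasureTheory

lemma renyiDiv_self {Ω : Type*} [MeasurableSpace Ω] (α : ℝ) (μ : Measure Ω)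
    [IsProbabilityMeasure μ] : renyiDiv α μ μ = 0 := by
  rw [renyiDiv, integral_congr_ae (μ.rnDeriv_self.mono fun x hx => by
    simp only [hx, ENNReal.toReal_one, Real.one_rpow] : _ =ᵐ[μ] fun _ => (1 : ℝ))]
  simp

lemma renyiDiv_pi {ι : Type*} [Fintype ι] {X : ι → Type*} [∀ i, MeasurableSpace (X i)]
    (α : ℝ) (μ ν : ∀ i, Measure (X i))
    [∀ i, SigmaFinite (μ i)] [∀ i, IsProbabilityMeasure (ν i)] (hμν : ∀ i, μ i ≪ ν i)
    (hint : ∀ i, ∫ y, ((μ i).rnDeriv (ν i) y).toReal ^ α ∂ν i ≠ 0) :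
    renyiDiv α (Measure.pi μ) (Measure.pi ν) = ∑ i, renyiDiv α (μ i) (ν i) := by
  have hprod : ∫ x, ((Measure.pi μ).rnDeriv (Measure.pi ν) x).toReal ^ α ∂Measure.pi ν
      = ∏ i, ∫ y, ((μ i).rnDeriv (ν i) y).toReal ^ α ∂ν i := by
    rw [← integral_fintype_prod_eq_prod]
    refine integral_congr_ae ((Measure.rnDeriv_pi μ ν hμν).mono fun x hx => ?_)
    simp only [hx, ENNReal.toReal_prod]
    exact (Real.finsetProd_rpow _ _ (fun i _ => ENNReal.toReal_nonneg) α).symm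
  rw [renyiDiv, hprod, Real.log_prod fun i _ => hint i, Finset.mul_sum]
  rfl

section Gaussian

variable {v : ℝ≥0}

lemma rnDeriv_gaussianReal_gaussianReal (m m' : ℝ) (hv : v ≠ 0) :
    (gaussianReal m v).rnDeriv (gaussianReal m' v) =ᵐ[gaussianReal m' v]
      fun y => gaussianPDF m v y / gaussianPDF m' v y := by
  have hac := gaussianReal_absolutelyContinuous m' hv
  filter_upwards [Measure.rnDeriv_eq_div (gaussianReal_absolutelyContinuous m hv) hac,
    hac (rnDeriv_gaussianReal m v), hac (rnDeriv_gaussianReal m' v)] with y h h₁ h₂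
  rw [h, h₁, h₂]

lemma gaussianPDFReal_mul_div_rpow (m m' : ℝ) (hv : v ≠ 0) (α y : ℝ) :
    gaussianPDFReal m' v y * (gaussianPDFReal m v y / gaussianPDFReal m' v y) ^ α
      = Real.exp (α * (α - 1) * (m - m') ^ 2 / (2 * v))
          * gaussianPDFReal (α * m + (1 - α) * m') v y := by
  have hv₀ : (2 : ℝ) * v ≠ 0 := by positivity
  have hratio : gaussianPDFReal m v y / gaussianPDFReal m' v y
      = Real.exp (-(y - m) ^ 2 / (2 * v) - -(y - m') ^ 2 / (2 * v)) := by
    rw [gaussianPDFReal, gaussianPDFReal, mul_div_mul_left _ _ (by positivity), Real.exp_sub]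
  rw [hratio, ← Real.exp_mul, gaussianPDFReal, gaussianPDFReal, mul_assoc, ← Real.exp_add,
    mul_left_comm, ← Real.exp_add]
  congr 2
  field_simp
  ring

lemma integral_rnDeriv_gaussianReal_rpow (m m' : ℝ) (hv : v ≠ 0) (α : ℝ) :
    ∫ y, ((gaussianReal m v).rnDeriv (gaussianReal m' v) y).toReal ^ α ∂gaussianReal m' v
      = Real.exp (α * (α - 1) * (m - m') ^ 2 / (2 * v)) := by
  calc _ = ∫ y, (gaussianPDFReal m v y / gaussianPDFReal m' v y) ^ α ∂gaussianReal m' v :=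
        integral_congr_ae ((rnDeriv_gaussianReal_gaussianReal m m' hv).mono fun y hy => by
          simp only [hy, ENNReal.toReal_div, toReal_gaussianPDF])
    _ = ∫ y, Real.exp (α * (α - 1) * (m - m') ^ 2 / (2 * v))
          * gaussianPDFReal (α * m + (1 - α) * m') v y := by
        simp only [integral_gaussianReal_eq_integral_smul hv, smul_eq_mul,
          gaussianPDFReal_mul_div_rpow m m' hv]
    _ = _ := by rw [integral_const_mul, integral_gaussianPDFReal_eq_one _ hv, mul_one]

lemma renyiDiv_gaussianReal (m m' : ℝ) (hv : v ≠ 0) {α : ℝ} (hα : α ≠ 1) :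
    renyiDiv α (gaussianReal m v) (gaussianReal m' v) = α * (m - m') ^ 2 / (2 * v) := by
  have hα₁ : α - 1 ≠ 0 := sub_ne_zero.mpr hα
  rw [renyiDiv, integral_rnDeriv_gaussianReal_rpow m m' hv, Real.log_exp]
  field_simp

lemma renyiDiv_pi_gaussianReal {ι : Type*} [Fintype ι] (m m' : ι → ℝ) (hv : v ≠ 0) {α : ℝ}
    (hα : α ≠ 1) :
    renyiDiv α (Measure.pi fun i => gaussianReal (m i) v)
        (Measure.pi fun i => gaussianReal (m' i) v)
      = α * (∑ i, (m i - m' i) ^ 2) / (2 * v) := by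
  rw [renyiDiv_pi α _ _
    (fun i => (gaussianReal_absolutelyContinuous (m i) hv).trans
      (gaussianReal_absolutelyContinuous' (m' i) hv))
    (fun i => by rw [integral_rnDeriv_gaussianReal_rpow _ _ hv]; exact (Real.exp_pos _).ne')]
  simp only [renyiDiv_gaussianReal _ _ hv hα]
  rw [Finset.mul_sum, Finset.sum_div]

end Gaussian

theorem gaussianMechanism_zCDP {D : Type*} {p : ℕ} (Neighbor : D → D → Prop)
    (f : D → Fin p → ℝ) (Δ σ : ℝ≥0) (hσ : 0 < σ)
    (hΔ : ∀ d d' : D, Neighbor d d' →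
      Real.sqrt (∑ j, (f d j - f d' j) ^ 2) ≤ Δ) :
    zCDP Neighbor
      (fun d => Measure.pi (fun j : Fin p => gaussianReal (f d j) ((σ * Δ) ^ 2)))
      (1 / (2 * (σ : ℝ) ^ 2)) := by
  intro d d' hdd' α hα
  have hdist : ∑ j, (f d j - f d' j) ^ 2 ≤ (Δ : ℝ) ^ 2 :=
    (Real.sqrt_le_left Δ.coe_nonneg).mp (hΔ d d' hdd')
  rcases eq_or_ne Δ 0 with rfl | hΔ₀
  -- no noise is added (`gaussianReal _ 0` is a Dirac mass), but then `f d = f d'`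
  · have hf : f d = f d' := by
      have hzero := (Finset.sum_eq_zero_iff_of_nonneg fun j _ => sq_nonneg (f d j - f d' j)).mp
        (le_antisymm (by simpa using hdist) (by positivity))
      funext j
      exact sub_eq_zero.mp (pow_eq_zero_iff two_ne_zero |>.mp (hzero j (Finset.mem_univ j)))
    simp only [hf, renyiDiv_self]
    positivity
  · have hv : (σ * Δ) ^ 2 ≠ 0 := pow_ne_zero _ (mul_ne_zero hσ.ne' hΔ₀)
    have hΔ₀' : (Δ : ℝ) ≠ 0 := by exact_mod_cast hΔ₀
    have hσ₀ : (σ : ℝ) ≠ 0 := by exact_mod_cast hσ.ne'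
    calc renyiDiv α _ _ = α * (∑ j, (f d j - f d' j) ^ 2) / (2 * ((σ * Δ) ^ 2 : ℝ≥0)) :=
          renyiDiv_pi_gaussianReal _ _ hv hα.ne'
      _ ≤ α * (Δ : ℝ) ^ 2 / (2 * ((σ * Δ) ^ 2 : ℝ≥0)) := by gcongr
      _ = 1 / (2 * (σ : ℝ) ^ 2) * α := by push_cast; field_simp
end
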